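/- Let q = p^n be a prime power, L = Q(ζ_{q-1}, ζ_p), 𝔭 a prime ideal of O_L above p, and χ_𝔭 the Teichmüller character of F_q ≅ O_L/𝔭 (so χ_𝔭(x mod 𝔭) ≡ x (mod 𝔭)). Then for all integers 1 ≤ i, j ≤ q-2, J_q(χ_𝔭^{-i}, χ_𝔭^{-j}) ≡ -C(i+j, i) (mod 𝔭), where C is the binomial coefficient. -/
import Mathlib

open Finset


-- C(p^N - 1, i) = (-1)^i in char p
lemma aux_choose_neg_one {p : ℕ} (hp : p.Prime) (N : ℕ) {F : Type*} [CommRing F] [CharP F p] :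
    ∀ i : ℕ, i ≤ p ^ N - 1 → (((p ^ N - 1).choose i : ℕ) : F) = (-1) ^ i := by
  intro i
  induction i with
  | zero => simp
  | succ i ih =>
    intro hi
    have hq : 2 ≤ p ^ N := by
      rcases Nat.eq_zero_or_pos N with rfl | hN
      · simp at hi
      · calc 2 ≤ p := hp.two_le
          _ ≤ p ^ N := Nat.le_self_pow hN.ne' p
    have hpascal : (p ^ N).choose (i + 1) = (p ^ N - 1).choose i + (p ^ N - 1).choose (i + 1) := by
      have h1 : p ^ N = (p ^ N - 1) + 1 := by omega
      rw [h1]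
      exact Nat.choose_succ_succ _ _
    have hdvd : p ∣ (p ^ N).choose (i + 1) :=
      Nat.Prime.dvd_choose_pow hp (Nat.succ_ne_zero i) (by omega)
    have hcast : (((p ^ N).choose (i + 1) : ℕ) : F) = 0 :=
      (CharP.cast_eq_zero_iff F p _).mpr hdvd
    have := congrArg (fun n : ℕ => (n : F)) hpascal
    simp only [Nat.cast_add] at this
    rw [hcast] at this
    have h2 := ih (by omega)
    rw [h2] at this
    have : (((p ^ N - 1).choose (i + 1) : ℕ) : F) = -(-1) ^ i := by linear_combination -this
    rw [this, pow_succ]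
    ring

lemma aux_key {p : ℕ} (hp : p.Prime) (N : ℕ) {F : Type*} [CommRing F] [CharP F p] :
    ∀ j i : ℕ, j ≤ p ^ N - 1 → i ≤ p ^ N - 1 →
      (((i + j).choose i : ℕ) : F) = (-1) ^ i * (((p ^ N - 1 - j).choose i : ℕ) : F) := by
  intro j
  induction j with
  | zero =>
    intro i _ hi
    rw [Nat.sub_zero, Nat.add_zero, Nat.choose_self, aux_choose_neg_one hp N i hi]
    rw [← mul_pow]
    norm_num
  | succ j ihj =>
    intro i hj hi
    induction i with
    | zero => simp
    | succ i ihi =>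
      have hji : j ≤ p ^ N - 1 := by omega
      have h1 : ((i + 1) + (j + 1)).choose (i + 1)
          = (i + (j + 1)).choose i + ((i + 1) + j).choose (i + 1) := by
        have : (i + 1) + (j + 1) = (i + (j + 1)) + 1 := by ring
        rw [this, Nat.choose_succ_succ]
        congr 2
        omega
      have h2 := ihi (by omega)
      have h3 := ihj (i + 1) hji hi
      set b := p ^ N - 1 - (j + 1) with hb
      have hb1 : p ^ N - 1 - j = b + 1 := by omega
      rw [hb1] at h3
      have hpascal : ((b + 1).choose (i + 1) : ℕ) = b.choose i + b.choose (i + 1) :=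
        Nat.choose_succ_succ _ _
      rw [h1, Nat.cast_add, h2, h3, hpascal, Nat.cast_add, pow_succ]
      ring



lemma aux_sum_pow {F : Type*} [Field F] [Fintype F] [DecidableEq F] (m : ℕ) (h1 : 0 < m)
    (h2 : m < 2 * (Fintype.card F - 1)) :
    ∑ x : F, x ^ m = if m = Fintype.card F - 1 then -1 else 0 := by
  set q := Fintype.card F with hq
  have hq2 : 2 ≤ q := by omega
  rcases lt_trichotomy m (q - 1) with hm | hm | hm
  · rw [if_neg (by omega), FiniteField.sum_pow_lt_card_sub_one F m hm]
  · rw [if_pos hm, hm]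
    have h0 : ∑ x : F, x ^ (q - 1) = ∑ x ∈ univ \ {(0 : F)}, x ^ (q - 1) := by
      rw [Finset.sum_sdiff_eq_sub (by simp), Finset.sum_singleton, zero_pow (by omega), sub_zero]
    rw [h0]
    have h1 : ∀ x ∈ univ \ {(0 : F)}, x ^ (q - 1) = 1 := by
      intro x hx
      simp only [mem_sdiff, mem_singleton] at hx
      exact FiniteField.pow_card_sub_one_eq_one x hx.2
    rw [Finset.sum_congr rfl h1, Finset.sum_const, Finset.card_sdiff_of_subset (by simp)]
    simp only [card_univ, Finset.card_singleton, nsmul_eq_mul, mul_one, ← hq]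
    have : ((q - 1 : ℕ) : F) = (q : ℕ) - 1 := by
      push_cast [Nat.cast_sub (by omega : 1 ≤ q)]; ring
    rw [this, hq, FiniteField.cast_card_eq_zero]
    ring
  · rw [if_neg (by omega)]
    set r := m - (q - 1) with hr
    have hr1 : 0 < r := by omega
    have hr2 : r < q - 1 := by omega
    have : ∀ x : F, x ^ m = x ^ r := by
      intro x
      rcases eq_or_ne x 0 with rfl | hx
      · rw [zero_pow (by omega), zero_pow (by omega)]
      · have hm' : m = (q - 1) + r := by omega
        rw [hm', pow_add, FiniteField.pow_card_sub_one_eq_one x hx, one_mul]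
    rw [Finset.sum_congr rfl fun x _ => this x, FiniteField.sum_pow_lt_card_sub_one F r hr2]

lemma aux_main {F R : Type*} [Field F] [Fintype F] [CommRing R]
    (p N q : ℕ) (hp : p.Prime) (hq3 : 3 ≤ q) (hqpow : q = p ^ N) [CharP F p]
    (hcard : Fintype.card F = q) (π : R →+* F) (χ : MulChar F R)
    (hπχ : ∀ y : F, π (χ y) = y)
    (i j : ℕ) (hi1 : 1 ≤ i) (hi2 : i ≤ q - 2) (hj1 : 1 ≤ j) (hj2 : j ≤ q - 2) :
    (∑ x : F, π ((χ ^ i)⁻¹ x * (χ ^ j)⁻¹ (1 - x))) + ((i + j).choose i : F) = 0 := by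
  classical
  have hterm : ∀ m : ℕ, 1 ≤ m → m ≤ q - 2 → ∀ x : F, π ((χ ^ m)⁻¹ x) = x ^ (q - 1 - m) := by
    intro m hm1 hm2 x
    rw [MulChar.inv_apply', MulChar.pow_apply' χ (by omega), map_pow, hπχ]
    rcases eq_or_ne x 0 with rfl | hx
    · rw [inv_zero, zero_pow (by omega), zero_pow (by omega)]
    · have hx1 : x ^ (q - 1) = 1 := by
        rw [← hcard]; exact FiniteField.pow_card_sub_one_eq_one x hx
      have hmul : x ^ m * x ^ (q - 1 - m) = 1 := by
        rw [← pow_add, Nat.add_sub_cancel' (by omega : m ≤ q - 1)]; exact hx1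
      rw [inv_pow]
      exact inv_eq_of_mul_eq_one_right hmul
  set a := q - 1 - i with ha
  set b := q - 1 - j with hb
  have hS : (∑ x : F, π ((χ ^ i)⁻¹ x * (χ ^ j)⁻¹ (1 - x)))
      = ∑ x : F, x ^ a * (1 - x) ^ b := by
    refine Finset.sum_congr rfl fun x _ => ?_
    rw [map_mul, hterm i hi1 hi2 x, hterm j hj1 hj2 (1 - x)]
  rw [hS]
  have hexp : ∀ x : F, (1 - x) ^ b = ∑ k ∈ range (b + 1), (-x) ^ k * (b.choose k : F) := by
    intro x
    rw [show (1 : F) - x = -x + 1 from by ring, add_pow]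
    exact Finset.sum_congr rfl fun k _ => by ring
  have hswap : (∑ x : F, x ^ a * (1 - x) ^ b)
      = ∑ k ∈ range (b + 1), (-1) ^ k * (b.choose k : F) * ∑ x : F, x ^ (a + k) := by
    calc (∑ x : F, x ^ a * (1 - x) ^ b)
        = ∑ x : F, ∑ k ∈ range (b + 1), (-1) ^ k * (b.choose k : F) * x ^ (a + k) := by
          refine Finset.sum_congr rfl fun x _ => ?_
          rw [hexp, Finset.mul_sum]
          refine Finset.sum_congr rfl fun k _ => ?_
          rw [neg_pow, pow_add]
          ring
      _ = ∑ k ∈ range (b + 1), ∑ x : F, (-1) ^ k * (b.choose k : F) * x ^ (a + k) :=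
          Finset.sum_comm
      _ = ∑ k ∈ range (b + 1), (-1) ^ k * (b.choose k : F) * ∑ x : F, x ^ (a + k) := by
          refine Finset.sum_congr rfl fun k _ => ?_
          rw [Finset.mul_sum]
  have hpow : ∀ k ∈ range (b + 1),
      (-1 : F) ^ k * (b.choose k : F) * (∑ x : F, x ^ (a + k))
        = (-1) ^ k * (b.choose k : F) * (if a + k = q - 1 then (-1 : F) else 0) := by
    intro k hk
    rw [mem_range] at hk
    have h1 : 0 < a + k := by omega
    have h2 : a + k < 2 * (Fintype.card F - 1) := by rw [hcard]; omega
    rw [aux_sum_pow (a + k) h1 h2, hcard]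
  rw [hswap, Finset.sum_congr rfl hpow]
  have hsingle : (∑ k ∈ range (b + 1),
      (-1 : F) ^ k * (b.choose k : F) * (if a + k = q - 1 then (-1 : F) else 0))
      = -((-1) ^ i * (b.choose i : F)) := by
    rw [Finset.sum_eq_single i]
    · rw [if_pos (by omega)]; ring
    · intro k _ hk
      rw [if_neg (by omega), mul_zero]
    · intro hi
      rw [mem_range] at hi
      rw [Nat.choose_eq_zero_of_lt (by omega)]
      simp
  rw [hsingle]
  have hkey := aux_key (F := F) hp N j i (by omega) (by omega)
  rw [← hqpow] at hkey
  linear_combination hkey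

set_option maxHeartbeats 2000000

set_option synthInstance.maxHeartbeats 1000000 in
theorem stmt18 (p N q : ℕ) (hp : p.Prime) (hN : 0 < N) (hq : q = p ^ N)
    {L : Type*} [Field L] [NumberField L]
    (𝔭 : Ideal (NumberField.RingOfIntegers L)) [𝔭.IsMaximal]
    (hp𝔭 : (p : NumberField.RingOfIntegers L) ∈ 𝔭)
    [Fintype (NumberField.RingOfIntegers L ⧸ 𝔭)]
    (hcard : Fintype.card (NumberField.RingOfIntegers L ⧸ 𝔭) = q)
    (χ : MulChar (NumberField.RingOfIntegers L ⧸ 𝔭) (NumberField.RingOfIntegers L))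
    (hχgen : ∀ ψ : MulChar (NumberField.RingOfIntegers L ⧸ 𝔭) (NumberField.RingOfIntegers L),
      ∃ k : ℕ, ψ = χ ^ k)
    (hχ : ∀ x : NumberField.RingOfIntegers L, χ (Ideal.Quotient.mk 𝔭 x) - x ∈ 𝔭)
    (i j : ℕ) (hi1 : 1 ≤ i) (hi2 : i ≤ q - 2) (hj1 : 1 ≤ j) (hj2 : j ≤ q - 2) :
    (∑ x : NumberField.RingOfIntegers L ⧸ 𝔭, (χ ^ i)⁻¹ x * (χ ^ j)⁻¹ ((1 : NumberField.RingOfIntegers L ⧸ 𝔭) - x))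
      + ((i + j).choose i : NumberField.RingOfIntegers L) ∈ 𝔭 := by
  classical
  have hq3 : 3 ≤ q := by
    have h1 : 1 ≤ q - 2 := le_trans hi1 hi2
    have h2 : 2 ≤ p ^ N :=
      calc 2 ≤ p := hp.two_le
        _ ≤ p ^ N := Nat.le_self_pow hN.ne' p
    omega
  rw [← Ideal.Quotient.eq_zero_iff_mem, map_add, map_sum, map_natCast]
  letI : Field (NumberField.RingOfIntegers L ⧸ 𝔭) := Ideal.Quotient.field 𝔭
  have hpF : ((p : ℕ) : NumberField.RingOfIntegers L ⧸ 𝔭) = 0 := by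
    have h0 : Ideal.Quotient.mk 𝔭 ((p : ℕ) : NumberField.RingOfIntegers L) = 0 :=
      Ideal.Quotient.eq_zero_iff_mem.mpr hp𝔭
    rw [map_natCast] at h0
    exact h0
  haveI : CharP (NumberField.RingOfIntegers L ⧸ 𝔭) p :=
    (CharP.charP_iff_prime_eq_zero hp).mpr hpF
  have hπχ : ∀ y : NumberField.RingOfIntegers L ⧸ 𝔭, Ideal.Quotient.mk 𝔭 (χ y) = y := by
    intro y
    obtain ⟨r, rfl⟩ := Ideal.Quotient.mk_surjective y
    exact Ideal.Quotient.eq.mpr (hχ r)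
  exact aux_main p N q hp hq3 hq hcard (Ideal.Quotient.mk 𝔭) χ hπχ i j hi1 hi2 hj1 hj2
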